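/- The matrix R satisfies the constant Yang–Baxter equation R₁₂ R₁₃ R₂₃ = R₂₃ R₁₃ R₁₂ as an identity of linear operators on ℂ² ⊗ ℂ² ⊗ ℂ². -/
import Mathlib


noncomputable section

open Matrix Complex

/-- 4×4 complex matrix reindexed by pairs in `Fin 2 × Fin 2` (lexicographic order). -/
def pairMat (A : Matrix (Fin 4) (Fin 4) ℂ) :
    Matrix (Fin 2 × Fin 2) (Fin 2 × Fin 2) ℂ :=
  Matrix.of fun p q =>
    A ⟨2 * p.1.val + p.2.val, by omega⟩ ⟨2 * q.1.val + q.2.val, by omega⟩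

/-- The exotic R-matrix of the bialgebra S03, as an operator on ℂ² ⊗ ℂ². -/
def RS03 : Matrix (Fin 2 × Fin 2) (Fin 2 × Fin 2) ℂ :=
  (Real.sqrt 2 : ℂ)⁻¹ • pairMat !![1,0,0,1; 0,1,1,0; 0,1,-1,0; -1,0,0,1]

/-- `A₁₂` : the operator `A` acting on tensor factors 1 and 2 of ℂ² ⊗ ℂ² ⊗ ℂ². -/
def op12 (A : Matrix (Fin 2 × Fin 2) (Fin 2 × Fin 2) ℂ) :
    Matrix (Fin 2 × Fin 2 × Fin 2) (Fin 2 × Fin 2 × Fin 2) ℂ :=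
  Matrix.of fun p q => if p.2.2 = q.2.2 then A (p.1, p.2.1) (q.1, q.2.1) else 0

/-- `A₁₃` : the operator `A` acting on tensor factors 1 and 3 of ℂ² ⊗ ℂ² ⊗ ℂ². -/
def op13 (A : Matrix (Fin 2 × Fin 2) (Fin 2 × Fin 2) ℂ) :
    Matrix (Fin 2 × Fin 2 × Fin 2) (Fin 2 × Fin 2 × Fin 2) ℂ :=
  Matrix.of fun p q => if p.2.1 = q.2.1 then A (p.1, p.2.2) (q.1, q.2.2) else 0

/-- `A₂₃` : the operator `A` acting on tensor factors 2 and 3 of ℂ² ⊗ ℂ² ⊗ ℂ². -/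
def op23 (A : Matrix (Fin 2 × Fin 2) (Fin 2 × Fin 2) ℂ) :
    Matrix (Fin 2 × Fin 2 × Fin 2) (Fin 2 × Fin 2 × Fin 2) ℂ :=
  Matrix.of fun p q => if p.1 = q.1 then A (p.2.1, p.2.2) (q.2.1, q.2.2) else 0

/-- Integer version of the S03 matrix (without the scalar). -/
def MZ : Matrix (Fin 2 × Fin 2) (Fin 2 × Fin 2) ℤ :=
  Matrix.of fun p q =>
    (!![1,0,0,1; 0,1,1,0; 0,1,-1,0; -1,0,0,1] : Matrix (Fin 4) (Fin 4) ℤ)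
      ⟨2 * p.1.val + p.2.val, by omega⟩ ⟨2 * q.1.val + q.2.val, by omega⟩

def opZ12 (A : Matrix (Fin 2 × Fin 2) (Fin 2 × Fin 2) ℤ) :
    Matrix (Fin 2 × Fin 2 × Fin 2) (Fin 2 × Fin 2 × Fin 2) ℤ :=
  Matrix.of fun p q => if p.2.2 = q.2.2 then A (p.1, p.2.1) (q.1, q.2.1) else 0

def opZ13 (A : Matrix (Fin 2 × Fin 2) (Fin 2 × Fin 2) ℤ) :
    Matrix (Fin 2 × Fin 2 × Fin 2) (Fin 2 × Fin 2 × Fin 2) ℤ :=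
  Matrix.of fun p q => if p.2.1 = q.2.1 then A (p.1, p.2.2) (q.1, q.2.2) else 0

def opZ23 (A : Matrix (Fin 2 × Fin 2) (Fin 2 × Fin 2) ℤ) :
    Matrix (Fin 2 × Fin 2 × Fin 2) (Fin 2 × Fin 2 × Fin 2) ℤ :=
  Matrix.of fun p q => if p.1 = q.1 then A (p.2.1, p.2.2) (q.2.1, q.2.2) else 0

lemma MZ_yb : opZ12 MZ * opZ13 MZ * opZ23 MZ = opZ23 MZ * opZ13 MZ * opZ12 MZ := by
  decide

lemma pairMat_eq : pairMat !![1,0,0,1; 0,1,1,0; 0,1,-1,0; -1,0,0,1]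
    = MZ.map (Int.cast : ℤ → ℂ) := by
  ext ⟨a, b⟩ ⟨c, d⟩
  fin_cases a <;> fin_cases b <;> fin_cases c <;> fin_cases d <;>
    simp [pairMat, MZ]

lemma op12_smul (c : ℂ) (A) : op12 (c • A) = c • op12 A := by
  ext p q; simp [op12, apply_ite (c • ·)]

lemma op13_smul (c : ℂ) (A) : op13 (c • A) = c • op13 A := by
  ext p q; simp [op13, apply_ite (c • ·)]

lemma op23_smul (c : ℂ) (A) : op23 (c • A) = c • op23 A := by
  ext p q; simp [op23, apply_ite (c • ·)]

lemma op12_map (A : Matrix (Fin 2 × Fin 2) (Fin 2 × Fin 2) ℤ) :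
    op12 (A.map (Int.cast : ℤ → ℂ)) = (opZ12 A).map (Int.cast : ℤ → ℂ) := by
  ext p q; simp [op12, opZ12, Matrix.map_apply, apply_ite (Int.cast : ℤ → ℂ)]

lemma op13_map (A : Matrix (Fin 2 × Fin 2) (Fin 2 × Fin 2) ℤ) :
    op13 (A.map (Int.cast : ℤ → ℂ)) = (opZ13 A).map (Int.cast : ℤ → ℂ) := by
  ext p q; simp [op13, opZ13, Matrix.map_apply, apply_ite (Int.cast : ℤ → ℂ)]

lemma op23_map (A : Matrix (Fin 2 × Fin 2) (Fin 2 × Fin 2) ℤ) :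
    op23 (A.map (Int.cast : ℤ → ℂ)) = (opZ23 A).map (Int.cast : ℤ → ℂ) := by
  ext p q; simp [op23, opZ23, Matrix.map_apply, apply_ite (Int.cast : ℤ → ℂ)]

lemma mapmul (A B : Matrix (Fin 2 × Fin 2 × Fin 2) (Fin 2 × Fin 2 × Fin 2) ℤ) :
    (A * B).map (Int.cast : ℤ → ℂ) = A.map Int.cast * B.map Int.cast := by
  ext p q
  simp [Matrix.mul_apply, Matrix.map_apply]

/-- The matrix R of S03 satisfies the constant Yang–Baxter equation
`R₁₂ R₁₃ R₂₃ = R₂₃ R₁₃ R₁₂` on ℂ² ⊗ ℂ² ⊗ ℂ². -/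
theorem RS03_yang_baxter :
    op12 RS03 * op13 RS03 * op23 RS03 = op23 RS03 * op13 RS03 * op12 RS03 := by
  rw [RS03, pairMat_eq, op12_smul, op13_smul, op23_smul, op12_map, op13_map, op23_map]
  simp only [Matrix.smul_mul, Matrix.mul_smul, ← mapmul, smul_smul]
  rw [MZ_yb]
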